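/- arXiv:2111.12352 — 3 statements merged into one kernel-verified Lean document; each statement's English description precedes it below -/
import Mathlib

section
/- Let T : dom(T) ⊆ H₁ → H₂ be a closed densely defined operator between Hilbert spaces, where dom(T) is equipped with the graph norm. If every sequence (uₙ) in dom(T) that is bounded in graph norm and satisfies Tuₙ → v in H₂ has a subsequence converging in H₁, then T has finite-dimensional kernel and closed range. -/
open Filter Topology

/-!
Bounded sequences of `D` whose images under `ι` and `T` both converge are Cauchy in the graph
norm, so the hypothesis says that `T : D →L[ℂ] H₂` is sequentially proper on bounded sets. By
Riesz's theorem this makes `ker T` finite-dimensional, and a finite-dimensional kernel has a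
closed complement `S`. On `S` the operator `T` is injective and still proper on bounded sets,
hence bounded below by a normalisation argument; a bounded-below operator on a Banach space has
closed range, and `T S = T D`.
-/

section

variable {𝕜 E F : Type*} [RCLike 𝕜] [NormedAddCommGroup E] [NormedSpace 𝕜 E]
  [NormedAddCommGroup F] [NormedSpace 𝕜 F]

def SeqProperOnBounded (T : E → F) : Prop :=
  ∀ (u : ℕ → E) (C : ℝ), (∀ n, ‖u n‖ ≤ C) → ∀ v : F, Tendsto (T ∘ u) atTop (𝓝 v) →
    ∃ φ : ℕ → ℕ, StrictMono φ ∧ ∃ w : E, Tendsto (u ∘ φ) atTop (𝓝 w)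

theorem ContinuousLinearMap.exists_norm_eq_one_tendsto_zero_of_not_bounded_below
    (T : E →L[𝕜] F) (hT : ∀ K : ℝ, ∃ x, K * ‖T x‖ < ‖x‖) :
    ∃ u : ℕ → E, (∀ n, ‖u n‖ = 1) ∧ Tendsto (T ∘ u) atTop (𝓝 0) := by
  choose x hx using fun n : ℕ => hT (n + 1)
  have hx0 : ∀ n, x n ≠ 0 := fun n h => by simpa [h] using hx n
  refine ⟨fun n => (‖x n‖⁻¹ : 𝕜) • x n, fun n => norm_smul_inv_norm (hx0 n), ?_⟩
  refine tendsto_zero_iff_norm_tendsto_zero.2 <|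
    squeeze_zero (fun n => norm_nonneg _) (fun n => ?_) tendsto_one_div_add_atTop_nhds_zero_nat
  have hpos : 0 < ‖x n‖ := norm_pos_iff.2 (hx0 n)
  rw [Function.comp_apply, map_smul, norm_smul, norm_inv, RCLike.norm_ofReal, abs_norm,
    inv_mul_le_iff₀ hpos, mul_one_div, le_div_iff₀ (by positivity)]
  linarith [hx n]

namespace SeqProperOnBounded

variable {T : E →L[𝕜] F}

theorem finiteDimensional_ker (hT : SeqProperOnBounded T) :
    FiniteDimensional 𝕜 (LinearMap.ker (T : E →ₗ[𝕜] F)) := by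
  refine .of_isCompact_closedBall₀ 𝕜 one_pos (IsSeqCompact.isCompact fun u hu => ?_)
  have hu_le : ∀ n, ‖(u n : E)‖ ≤ 1 := by simpa using hu
  have hTu : T ∘ (fun n => (u n : E)) = fun _ => 0 := funext fun n => (u n).2
  obtain ⟨φ, hφ, w, hw⟩ := hT _ 1 hu_le 0 (by rw [hTu]; exact tendsto_const_nhds)
  have hw_ker : w ∈ LinearMap.ker (T : E →ₗ[𝕜] F) :=
    T.isClosed_ker.mem_of_tendsto hw (.of_forall fun n => (u (φ n)).2)
  refine ⟨⟨w, hw_ker⟩, ?_, φ, hφ, tendsto_subtype_rng.2 hw⟩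
  simpa using le_of_tendsto hw.norm (.of_forall fun n => hu_le (φ n))

theorem comp_subtypeL (hT : SeqProperOnBounded T) {S : Submodule 𝕜 E}
    (hS : IsClosed (S : Set E)) : SeqProperOnBounded (T ∘L S.subtypeL) := by
  intro u C hu v hv
  obtain ⟨φ, hφ, w, hw⟩ := hT (fun n => (u n : E)) C hu v hv
  have hwS : w ∈ S := hS.mem_of_tendsto hw (.of_forall fun n => (u (φ n)).2)
  exact ⟨φ, hφ, ⟨w, hwS⟩, tendsto_subtype_rng.2 hw⟩

theorem exists_antilipschitzWith (hT : SeqProperOnBounded T) (hinj : Function.Injective T) :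
    ∃ K, AntilipschitzWith K T := by
  suffices ∃ K : ℝ, ∀ x, ‖x‖ ≤ K * ‖T x‖ by
    obtain ⟨K, hK⟩ := this
    exact ⟨K.toNNReal, T.antilipschitz_of_bound fun x =>
      (hK x).trans (mul_le_mul_of_nonneg_right K.le_coe_toNNReal (norm_nonneg _))⟩
  by_contra! hK
  obtain ⟨u, hu, hTu⟩ := T.exists_norm_eq_one_tendsto_zero_of_not_bounded_below hK
  obtain ⟨φ, hφ, w, hw⟩ := hT u 1 (fun n => (hu n).le) 0 hTu
  have hw_norm : ‖w‖ = 1 := tendsto_nhds_unique hw.norm (by simp [hu])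
  have hTw : T w = 0 :=
    tendsto_nhds_unique ((T.continuous.tendsto w).comp hw) (hTu.comp hφ.tendsto_atTop)
  simp [hinj (hTw.trans T.map_zero.symm)] at hw_norm

theorem isClosed_range [CompleteSpace E] (hT : SeqProperOnBounded T) :
    IsClosed (LinearMap.range (T : E →ₗ[𝕜] F) : Set F) := by
  have := hT.finiteDimensional_ker
  obtain ⟨S, hS, hcompl⟩ := (Submodule.ClosedComplemented.of_finiteDimensional
    (LinearMap.ker (T : E →ₗ[𝕜] F))).exists_isClosed_isCompl
  have : CompleteSpace S := hS.completeSpace_coe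
  have hinj : Function.Injective (T ∘L S.subtypeL) :=
    (injective_iff_map_eq_zero _).2 fun x hx =>
      Subtype.ext (Submodule.disjoint_def.1 hcompl.symm.disjoint x x.2 hx)
  obtain ⟨K, hK⟩ := (hT.comp_subtypeL hS).exists_antilipschitzWith hinj
  have hrange : Set.range (T ∘L S.subtypeL) = LinearMap.range (T : E →ₗ[𝕜] F) := by
    rw [← Submodule.map_eq_range_iff.2 hcompl.codisjoint.symm]
    ext
    simp
  rw [← hrange]
  exact hK.isClosed_range (T ∘L S.subtypeL).uniformContinuous

end SeqProperOnBounded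

theorem seqProperOnBounded_of_norm_le_add {G : Type*} [NormedAddCommGroup G] [NormedSpace 𝕜 G]
    [CompleteSpace E] (ι : E →L[𝕜] G) (T : E →L[𝕜] F) (hnorm : ∀ x, ‖x‖ ≤ ‖ι x‖ + ‖T x‖)
    (hsubseq : ∀ (u : ℕ → E) (C : ℝ), (∀ n, ‖u n‖ ≤ C) → ∀ v : F,
      Tendsto (T ∘ u) atTop (𝓝 v) →
      ∃ φ : ℕ → ℕ, StrictMono φ ∧ ∃ w : G, Tendsto (ι ∘ u ∘ φ) atTop (𝓝 w)) :
    SeqProperOnBounded T := by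
  intro u C hu v hv
  obtain ⟨φ, hφ, w, hw⟩ := hsubseq u C hu v hv
  have hemb : IsUniformInducing (ι.prod T) := by
    refine ((ι.prod T).isUniformEmbedding_of_bound (K := 2) fun x => ?_).isUniformInducing
    rw [ContinuousLinearMap.prod_apply, NNReal.coe_ofNat]
    linarith [hnorm x, norm_fst_le (ι x, T x), norm_snd_le (ι x, T x)]
  have hcauchy : CauchySeq (ι.prod T ∘ (u ∘ φ)) :=
    (hw.prodMk_nhds (hv.comp hφ.tendsto_atTop)).cauchySeq
  rw [CauchySeq, ← Filter.map_map, hemb.cauchy_map_iff] at hcauchy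
  exact ⟨φ, hφ, cauchySeq_tendsto_of_complete hcauchy⟩

end

theorem norm_le_add_of_sq_eq {E G F : Type*} [NormedAddCommGroup E] [NormedAddCommGroup G]
    [NormedAddCommGroup F] {x : E} {y : G} {z : F} (h : ‖x‖ ^ 2 = ‖y‖ ^ 2 + ‖z‖ ^ 2) :
    ‖x‖ ≤ ‖y‖ + ‖z‖ := by
  nlinarith [norm_nonneg x, norm_nonneg y, norm_nonneg z]

theorem stmt_1_general {H₁ H₂ D : Type*}
    [NormedAddCommGroup H₁] [InnerProductSpace ℂ H₁]
    [NormedAddCommGroup H₂] [InnerProductSpace ℂ H₂]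
    [NormedAddCommGroup D] [InnerProductSpace ℂ D] [CompleteSpace D]
    (ι : D →L[ℂ] H₁)
    (T : D →L[ℂ] H₂)
    (hgraph : ∀ u : D, ‖u‖ ^ 2 = ‖ι u‖ ^ 2 + ‖T u‖ ^ 2)
    (hsubseq : ∀ (u : ℕ → D) (C : ℝ), (∀ n, ‖u n‖ ≤ C) →
      ∀ v : H₂, Tendsto (fun n => T (u n)) atTop (𝓝 v) →
      ∃ φ : ℕ → ℕ, StrictMono φ ∧ ∃ w : H₁,
        Tendsto (fun n => ι (u (φ n))) atTop (𝓝 w)) :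
    FiniteDimensional ℂ (LinearMap.ker (T : D →ₗ[ℂ] H₂)) ∧ IsClosed (LinearMap.range (T : D →ₗ[ℂ] H₂) : Set H₂) := by
  have hT : SeqProperOnBounded T :=
    seqProperOnBounded_of_norm_le_add ι T (fun u => norm_le_add_of_sq_eq (hgraph u)) hsubseq
  exact ⟨hT.finiteDimensional_ker, hT.isClosed_range⟩

/-- Let `T` be a closed densely defined operator between Hilbert spaces,
modelled as a continuous linear map `T : D →L[ℂ] H₂` on its domain `D`, a Hilbert space
carrying the graph norm (`‖u‖² = ‖ι u‖² + ‖T u‖²` where `ι : D →L[ℂ] H₁` is the injective,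
densely-ranged inclusion of the domain into `H₁`).  If every sequence in `D` bounded in the
graph norm with `T uₙ → v` in `H₂` has a subsequence whose image under `ι` converges in `H₁`,
then `T` has finite-dimensional kernel and closed range. -/
theorem stmt_1 {H₁ H₂ D : Type*}
    [NormedAddCommGroup H₁] [InnerProductSpace ℂ H₁] [CompleteSpace H₁]
    [NormedAddCommGroup H₂] [InnerProductSpace ℂ H₂] [CompleteSpace H₂]
    [NormedAddCommGroup D] [InnerProductSpace ℂ D] [CompleteSpace D]
    (ι : D →L[ℂ] H₁) (hinj : Function.Injective ι) (hdense : DenseRange ι)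
    (T : D →L[ℂ] H₂)
    (hgraph : ∀ u : D, ‖u‖ ^ 2 = ‖ι u‖ ^ 2 + ‖T u‖ ^ 2)
    (hsubseq : ∀ (u : ℕ → D) (C : ℝ), (∀ n, ‖u n‖ ≤ C) →
      ∀ v : H₂, Tendsto (fun n => T (u n)) atTop (𝓝 v) →
      ∃ φ : ℕ → ℕ, StrictMono φ ∧ ∃ w : H₁,
        Tendsto (fun n => ι (u (φ n))) atTop (𝓝 w)) :
    FiniteDimensional ℂ (LinearMap.ker (T : D →ₗ[ℂ] H₂)) ∧ IsClosed (LinearMap.range (T : D →ₗ[ℂ] H₂) : Set H₂) :=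
  stmt_1_general ι T hgraph hsubseq
end

section
/- Let T₁ ⊆ T₂ be two closed extensions of the same densely defined operator (i.e. T₂ extends T₁), both Fredholm as operators from their graph-norm domains to H₂. Then dom(T₂)/dom(T₁) is finite-dimensional and ind(T₂) = ind(T₁) + dim(dom(T₂)/dom(T₁)). -/
/-!
The map `V ⧸ D₁ → W ⧸ T(D₁)` induced by `T` has kernel the image of `ker T`, so `V ⧸ D₁` is
finite-dimensional as soon as `ker T` and `W ⧸ T(D₁)` (the cokernel of `T₁`) are. The index
formula is then additivity of the index under composition, applied to `T₁ = T ∘ ι` with the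
inclusion `ι : D₁ → V`, whose index is `-dim (V ⧸ D₁)`.
-/

/-- A continuous linear map is Fredholm if it has finite-dimensional kernel, closed range
and finite-dimensional cokernel. -/
def IsFredholmOp {X Y : Type*} [NormedAddCommGroup X] [NormedAddCommGroup Y]
    [NormedSpace ℂ X] [NormedSpace ℂ Y] (T : X →L[ℂ] Y) : Prop :=
  FiniteDimensional ℂ (LinearMap.ker (T : X →ₗ[ℂ] Y)) ∧ IsClosed (LinearMap.range (T : X →ₗ[ℂ] Y) : Set Y) ∧
    FiniteDimensional ℂ (Y ⧸ LinearMap.range (T : X →ₗ[ℂ] Y))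

/-- The Fredholm index `dim ker − dim coker`. -/
noncomputable def fredInd {X Y : Type*} [NormedAddCommGroup X] [NormedAddCommGroup Y]
    [NormedSpace ℂ X] [NormedSpace ℂ Y] (T : X →L[ℂ] Y) : ℤ :=
  (Module.finrank ℂ (LinearMap.ker (T : X →ₗ[ℂ] Y)) : ℤ) - Module.finrank ℂ (Y ⧸ LinearMap.range (T : X →ₗ[ℂ] Y))

section

open Module LinearMap

variable {K V W : Type*} [DivisionRing K] [AddCommGroup V] [Module K V] [AddCommGroup W] [Module K W]

theorem LinearMap.finiteDimensional_of_ker_range (f : V →ₗ[K] W) [FiniteDimensional K (ker f)]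
    [FiniteDimensional K (range f)] : FiniteDimensional K V := by
  refine Module.finite_def.mpr (Submodule.fg_of_fg_map_of_fg_inf_ker f ?_ ?_)
  · rw [Submodule.map_top]; exact Module.Finite.iff_fg.mp inferInstance
  · rw [top_inf_eq]; exact Module.Finite.iff_fg.mp inferInstance

namespace Submodule

variable (T : V →ₗ[K] W) (D₁ : Submodule K V)

theorem ker_mapQ_map : ker (D₁.mapQ (D₁.map T) T (le_comap_map T D₁)) = (ker T).map D₁.mkQ := by
  rw [ker_mapQ, comap_map_eq, map_sup, mkQ_map_self, bot_sup_eq]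

theorem finiteDimensional_quotient_of_map [FiniteDimensional K (ker T)]
    [FiniteDimensional K (W ⧸ D₁.map T)] : FiniteDimensional K (V ⧸ D₁) := by
  let g := D₁.mapQ (D₁.map T) T (le_comap_map T D₁)
  have : FiniteDimensional K (ker g) := by rw [ker_mapQ_map]; infer_instance
  exact g.finiteDimensional_of_ker_range

end Submodule

theorem LinearMap.index_eq_index_comp_subtype_add_finrank (T : V →ₗ[K] W) (D₁ : Submodule K V)
    [FiniteDimensional K (ker T)] [FiniteDimensional K (W ⧸ range T)]
    [FiniteDimensional K (V ⧸ D₁)] :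
    T.index = (T ∘ₗ D₁.subtype).index + finrank K (V ⧸ D₁) := by
  have : FiniteDimensional K (ker D₁.subtype) := by rw [Submodule.ker_subtype]; infer_instance
  have : FiniteDimensional K (V ⧸ range D₁.subtype) := by rw [Submodule.range_subtype]; infer_instance
  rw [index_comp, index_of_injective D₁.injective_subtype, Submodule.range_subtype]
  ring

end

theorem stmt_2_general {H₂ D : Type*}
    [NormedAddCommGroup H₂] [InnerProductSpace ℂ H₂]
    [NormedAddCommGroup D] [InnerProductSpace ℂ D]
    (T : D →L[ℂ] H₂)
    (D₁ : Submodule ℂ D)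
    (hT₂ : IsFredholmOp T) (hT₁ : IsFredholmOp (T.comp D₁.subtypeL)) :
    FiniteDimensional ℂ (D ⧸ D₁) ∧
      fredInd T = fredInd (T.comp D₁.subtypeL) + Module.finrank ℂ (D ⧸ D₁) := by
  obtain ⟨hker, -, hcoker⟩ := hT₂
  obtain ⟨-, -, hcoker₁⟩ := hT₁
  have : FiniteDimensional ℂ (H₂ ⧸ D₁.map (T : D →ₗ[ℂ] H₂)) :=
    LinearMap.range_domRestrict D₁ (T : D →ₗ[ℂ] H₂) ▸ hcoker₁
  have hquot := D₁.finiteDimensional_quotient_of_map (T : D →ₗ[ℂ] H₂)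
  -- `fredInd` is definitionally `LinearMap.index` of the underlying linear map.
  exact ⟨hquot, (T : D →ₗ[ℂ] H₂).index_eq_index_comp_subtype_add_finrank D₁⟩

/-- Let `T₁ ⊆ T₂` be two closed extensions of the same densely defined
operator, both Fredholm from their graph-norm domains.  We model `T₂` as a continuous
linear map `T : D →L[ℂ] H₂` on its graph-norm domain `D` (a Hilbert space, injectively and
densely mapped into `H₁` by `ι`) and `T₁` as the restriction of `T` to a closed subspace
`D₁ ⊆ D` (the graph-norm domain of `T₁`).  Then `dom(T₂)/dom(T₁) = D ⧸ D₁` is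
finite-dimensional and `ind(T₂) = ind(T₁) + dim (D ⧸ D₁)`. -/
theorem stmt_2 {H₁ H₂ D : Type*}
    [NormedAddCommGroup H₁] [InnerProductSpace ℂ H₁] [CompleteSpace H₁]
    [NormedAddCommGroup H₂] [InnerProductSpace ℂ H₂] [CompleteSpace H₂]
    [NormedAddCommGroup D] [InnerProductSpace ℂ D] [CompleteSpace D]
    (ι : D →L[ℂ] H₁) (hinj : Function.Injective ι) (hdense : DenseRange ι)
    (T : D →L[ℂ] H₂)
    (hgraph : ∀ u : D, ‖u‖ ^ 2 = ‖ι u‖ ^ 2 + ‖T u‖ ^ 2)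
    (D₁ : Submodule ℂ D) (hD₁ : IsClosed (D₁ : Set D)) (hdense₁ : DenseRange (ι.comp D₁.subtypeL))
    (hT₂ : IsFredholmOp T) (hT₁ : IsFredholmOp (T.comp D₁.subtypeL)) :
    FiniteDimensional ℂ (D ⧸ D₁) ∧
      fredInd T = fredInd (T.comp D₁.subtypeL) + Module.finrank ℂ (D ⧸ D₁) :=
  stmt_2_general T D₁ hT₂ hT₁
end

section
/- Let D_min ⊆ D_max be closed densely defined operators between Hilbert spaces, and suppose there is a bounded surjection γ : dom(D_max) → Ȟ (graph norm on the domain) with ker γ = dom(D_min). Then for any closed subspace B ⊆ Ȟ, the operator D_B := D_max restricted to γ⁻¹(B) is a closed operator, and B ↦ D_B is a bijection between closed subspaces of Ȟ and closed extensions of D_min contained in D_max. -/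
/-! The open mapping theorem makes `γ` a quotient map, so a subset of `Ȟ` is closed exactly
when its preimage is. Together with the purely algebraic correspondence between submodules
of `Ȟ` and submodules of `dom(D_max)` containing `ker γ`, this gives the bijection. -/

open Topology

namespace Submodule

variable {R M N : Type*} [Ring R] [AddCommGroup M] [Module R M] [TopologicalSpace M]
  [AddCommGroup N] [Module R N] [TopologicalSpace N] {f : M →ₗ[R] N}

theorem isClosed_comap_iff (hf : IsQuotientMap f) (B : Submodule R N) :
    IsClosed (B.comap f : Set M) ↔ IsClosed (B : Set N) :=
  hf.isClosed_preimage

theorem existsUnique_isClosed_comap_eq (hf : IsQuotientMap f) {C : Submodule R M}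
    (hC : IsClosed (C : Set M)) (hker : LinearMap.ker f ≤ C) :
    ∃! B : Submodule R N, IsClosed (B : Set N) ∧ B.comap f = C := by
  have hcomap : (C.map f).comap f = C := by
    rw [comap_map_eq, sup_eq_left.mpr hker]
  refine ⟨C.map f, ⟨?_, hcomap⟩, ?_⟩
  · rwa [← isClosed_comap_iff hf, hcomap]
  · rintro B ⟨-, rfl⟩
    exact (map_comap_eq_of_surjective hf.surjective B).symm

end Submodule

/-- Let `γ : X → Ȟ` be a bounded surjection of Banach spaces, where
`X = dom(D_max)` with the graph norm and `ker γ = dom(D_min)`.  Closed extensions of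
`D_min` contained in `D_max` correspond to their graph-norm closed domains, i.e. closed
subspaces of `X` containing `ker γ`.  Then for every closed subspace `B ⊆ Ȟ` the preimage
`γ⁻¹(B)` (the domain of `D_B`, so `D_B` is a closed operator) is closed and contains
`ker γ`, and `B ↦ γ⁻¹(B)` is a bijection from closed subspaces of `Ȟ` onto closed
subspaces of `X` containing `ker γ`. -/
theorem stmt_11 {X HV : Type*}
    [NormedAddCommGroup X] [NormedSpace ℂ X] [CompleteSpace X]
    [NormedAddCommGroup HV] [NormedSpace ℂ HV] [CompleteSpace HV]
    (γ : X →L[ℂ] HV) (hsurj : Function.Surjective γ) :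
    (∀ B : Submodule ℂ HV, IsClosed (B : Set HV) →
      IsClosed ((B.comap (γ : X →ₗ[ℂ] HV) : Submodule ℂ X) : Set X) ∧
        LinearMap.ker (γ : X →ₗ[ℂ] HV) ≤ B.comap (γ : X →ₗ[ℂ] HV)) ∧
    (∀ C : Submodule ℂ X, IsClosed (C : Set X) → LinearMap.ker (γ : X →ₗ[ℂ] HV) ≤ C →
      ∃! B : Submodule ℂ HV, IsClosed (B : Set HV) ∧ B.comap (γ : X →ₗ[ℂ] HV) = C) := by
  have hγ : IsQuotientMap (γ : X →ₗ[ℂ] HV) := γ.isQuotientMap hsurj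
  exact ⟨fun B hB ↦ ⟨(Submodule.isClosed_comap_iff hγ B).mpr hB, LinearMap.ker_le_comap _⟩,
    fun C hC hker ↦ Submodule.existsUnique_isClosed_comap_eq hγ hC hker⟩
end
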